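/- If X is a subword (not necessarily contiguous) of Y, then X ≤ Y in the path order; and if X ≤ Y then |X| ≤ |Y|. -/

import Mathlib

inductive Symb : Type
  | plus | minus | star
deriving DecidableEq


/-- the dual of a symbol: `+` ↦ `-`, `-` ↦ `+`, `*` ↦ `*` -/
def dualSym : Symb → Symb
  | Symb.plus => Symb.minus
  | Symb.minus => Symb.plus
  | Symb.star => Symb.star

/-- the dual (involution) of a word: reverse and dualize each symbol -/
def dualWord (W : List Symb) : List Symb := (W.map dualSym).reverse

/-- the arc relation of the reflexive path `P(W)` on vertices `{0,…,|W|}` -/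
def pathArc (W : List Symb) (i j : ℕ) : Prop :=
  i ≤ W.length ∧ j ≤ W.length ∧
    (i = j ∨ (j = i + 1 ∧ (W[i]? = some Symb.plus ∨ W[i]? = some Symb.star))
           ∨ (i = j + 1 ∧ (W[j]? = some Symb.minus ∨ W[j]? = some Symb.star)))

/-- `f` is an end-point preserving homomorphism from the path `P(V)` onto the path `P(U)` -/
def EPHom (V U : List Symb) (f : ℕ → ℕ) : Prop :=
  f 0 = 0 ∧ f V.length = U.length ∧
  (∀ i j, pathArc V i j → pathArc U (f i) (f j)) ∧
  (∀ m, m ≤ U.length → ∃ i, i ≤ V.length ∧ f i = m)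

/-- the order on words: `U ≤ V` iff there is an end-point preserving
homomorphism from `P(V)` onto `P(U)` -/
def wle (U V : List Symb) : Prop := ∃ f, EPHom V U f

/-!
Prepending a letter to `Y` preserves `X ≤ Y`: precompose with the map folding the first edge of
`P(a :: Y)` onto vertex `0`. Prepending the same letter to both words preserves it too: shift the
homomorphism one vertex to the right. Induction along `List.Sublist` then gives `X ≤ Y`. Conversely,
an end-point preserving homomorphism maps the `|Y| + 1` vertices of `P(Y)` onto the `|X| + 1`
vertices of `P(X)`.
-/

section PathArc

variable {a : Symb} {W : List Symb} {i j : ℕ}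

lemma pathArc_self (h : i ≤ W.length) : pathArc W i i :=
  ⟨h, h, Or.inl rfl⟩

lemma pathArc_cons_succ_succ : pathArc (a :: W) (i + 1) (j + 1) ↔ pathArc W i j := by
  simp only [pathArc, List.length_cons, List.getElem?_cons_succ, Nat.add_right_cancel_iff,
    Nat.add_le_add_iff_right]

lemma pathArc_cons_zero_succ :
    pathArc (a :: W) 0 (j + 1) ↔ j = 0 ∧ (a = Symb.plus ∨ a = Symb.star) := by
  simp only [pathArc]
  constructor
  · rintro ⟨-, -, h | ⟨h, hc⟩ | h⟩ <;> first | omega | simp_all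
  · rintro ⟨rfl, ha⟩
    simpa using ha

lemma pathArc_cons_succ_zero :
    pathArc (a :: W) (i + 1) 0 ↔ i = 0 ∧ (a = Symb.minus ∨ a = Symb.star) := by
  simp only [pathArc]
  constructor
  · rintro ⟨-, -, h | h | ⟨h, hc⟩⟩ <;> first | omega | simp_all
  · rintro ⟨rfl, ha⟩
    simpa using ha

end PathArc

section Wle

variable {X Y : List Symb}

lemma wle_refl (X : List Symb) : wle X X :=
  ⟨id, rfl, rfl, fun _ _ h => h, fun m hm => ⟨m, hm, rfl⟩⟩

lemma wle_cons_right (a : Symb) (h : wle X Y) : wle X (a :: Y) := by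
  obtain ⟨g, h0, hend, harc, hsurj⟩ := h
  have hloop : pathArc X (g 0) (g 0) := pathArc_self (by omega)
  refine ⟨fun i => g (i - 1), h0, hend, ?_, ?_⟩
  · rintro (_ | i) (_ | j) hij
    · exact hloop
    · obtain ⟨rfl, -⟩ := pathArc_cons_zero_succ.1 hij
      exact hloop
    · obtain ⟨rfl, -⟩ := pathArc_cons_succ_zero.1 hij
      exact hloop
    · exact harc i j (pathArc_cons_succ_succ.1 hij)
  · intro m hm
    obtain ⟨i, hi, hgi⟩ := hsurj m hm
    exact ⟨i + 1, by simp [hi], hgi⟩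

lemma wle_cons_cons (a : Symb) (h : wle X Y) : wle (a :: X) (a :: Y) := by
  obtain ⟨g, h0, hend, harc, hsurj⟩ := h
  refine ⟨fun | 0 => 0 | i + 1 => g i + 1, rfl, by simp [hend], ?_, ?_⟩
  · rintro (_ | i) (_ | j) hij
    · exact pathArc_self (Nat.zero_le _)
    · obtain ⟨rfl, ha⟩ := pathArc_cons_zero_succ.1 hij
      simpa [h0] using pathArc_cons_zero_succ.2 ⟨rfl, ha⟩
    · obtain ⟨rfl, ha⟩ := pathArc_cons_succ_zero.1 hij
      simpa [h0] using pathArc_cons_succ_zero.2 ⟨rfl, ha⟩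
    · exact pathArc_cons_succ_succ.2 (harc i j (pathArc_cons_succ_succ.1 hij))
  · rintro (_ | m) hm
    · exact ⟨0, Nat.zero_le _, rfl⟩
    · obtain ⟨i, hi, hgi⟩ := hsurj m (by simpa using hm)
      exact ⟨i + 1, by simpa using hi, by simp [hgi]⟩

lemma List.Sublist.wle (h : X.Sublist Y) : wle X Y := by
  induction h with
  | slnil => exact wle_refl []
  | cons a _ ih => exact wle_cons_right a ih
  | cons_cons a _ ih => exact wle_cons_cons a ih

lemma EPHom.length_le {V U : List Symb} {f : ℕ → ℕ} (hf : EPHom V U f) :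
    U.length ≤ V.length := by
  have hsurj : Set.SurjOn f (Finset.range (V.length + 1)) (Finset.range (U.length + 1)) := by
    intro m hm
    obtain ⟨i, hi, rfl⟩ := hf.2.2.2 m (by simpa [Nat.lt_succ_iff] using hm)
    exact ⟨i, by simpa [Nat.lt_succ_iff] using hi, rfl⟩
  simpa using Finset.card_le_card_of_surjOn f hsurj

lemma wle.length_le (h : wle X Y) : X.length ≤ Y.length :=
  h.elim fun _ hf => hf.length_le

end Wle

/-- If `X` is a subword of `Y` then `X ≤ Y`; and if `X ≤ Y` then `|X| ≤ |Y|`. -/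
theorem stmt_5 (X Y : List Symb) :
    (X.Sublist Y → wle X Y) ∧ (wle X Y → X.length ≤ Y.length) :=
  ⟨List.Sublist.wle, wle.length_le⟩
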